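/- Case (II): Suppose χ₁ has order exactly r, and (V, ρ, X, Y) is a representation additionally satisfying X^r = id_V, Y^s = 0 for some positive integer s, and X∘Y = χ₂(g₁)·Y∘X. If (V, ρ, X, Y) is irreducible, then Y = 0 on V; consequently (V, ρ, X) is an irreducible B(ξ)-representation in the sense of Lemma 'basic'. -/
import Mathlib


noncomputable section

/-- `(V, ρ, X, Y)` is a representation of the common part of the rank-2 algebra `A(ξ)`:
`ρ` is a group homomorphism (recorded via multiplicativity and unitality),
`ρ(h)∘X = χ₁(h)·(X∘ρ(h))` and `ρ(h)∘Y = χ₂(h)·(Y∘ρ(h))` for all `h ∈ Γ`, and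
`ρ(g) = ξ(g)·id` for all `g ∈ Λ`. -/
def IsRep {Γ : Type*} [CommGroup Γ] (χ₁ χ₂ : Γ →* ℂˣ) (Λ : Subgroup Γ) (ξ : ↥Λ →* ℂˣ)
    {V : Type*} [AddCommGroup V] [Module ℂ V]
    (ρ : Γ → Module.End ℂ V) (X Y : Module.End ℂ V) : Prop :=
  (∀ a b : Γ, ρ (a * b) = ρ a * ρ b) ∧ ρ 1 = 1 ∧
  (∀ h : Γ, ρ h * X = (χ₁ h : ℂ) • (X * ρ h)) ∧
  (∀ h : Γ, ρ h * Y = (χ₂ h : ℂ) • (Y * ρ h)) ∧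
  ∀ g : Λ, ρ (g : Γ) = (ξ g : ℂ) • (1 : Module.End ℂ V)

/-- A subspace `W` is stable under `X`, `Y` and all `ρ(h)`. -/
def Stable2 {Γ : Type*} {V : Type*} [AddCommGroup V] [Module ℂ V]
    (ρ : Γ → Module.End ℂ V) (X Y : Module.End ℂ V) (W : Submodule ℂ V) : Prop :=
  (∀ v ∈ W, X v ∈ W) ∧ (∀ v ∈ W, Y v ∈ W) ∧ ∀ h : Γ, ∀ v ∈ W, ρ h v ∈ W

/-- Irreducibility: `V ≠ 0` and the only subspaces stable under `X`, `Y` and all `ρ(h)`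
are `0` and `V`. -/
def Irred2 {Γ : Type*} {V : Type*} [AddCommGroup V] [Module ℂ V]
    (ρ : Γ → Module.End ℂ V) (X Y : Module.End ℂ V) : Prop :=
  (∃ v : V, v ≠ 0) ∧ ∀ W : Submodule ℂ V, Stable2 ρ X Y W → W = ⊥ ∨ W = ⊤
/-- `(V, ρ, X)` is a `B(ξ)`-representation: `ρ` is a group homomorphism (recorded via
multiplicativity and unitality), `ρ(h)∘X = χ₁(h)·(X∘ρ(h))` for all `h`, `X^r = id`,
and `ρ(g) = ξ(g)·id` for all `g ∈ Λ`. -/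
def IsBRep {Γ : Type*} [CommGroup Γ] (χ₁ : Γ →* ℂˣ) (Λ : Subgroup Γ) (ξ : ↥Λ →* ℂˣ)
    (r : ℕ) {V : Type*} [AddCommGroup V] [Module ℂ V]
    (ρ : Γ → Module.End ℂ V) (X : Module.End ℂ V) : Prop :=
  (∀ a b : Γ, ρ (a * b) = ρ a * ρ b) ∧ ρ 1 = 1 ∧
  (∀ h : Γ, ρ h * X = (χ₁ h : ℂ) • (X * ρ h)) ∧
  X ^ r = 1 ∧
  ∀ g : Λ, ρ (g : Γ) = (ξ g : ℂ) • (1 : Module.End ℂ V)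

/-- A subspace `W` is stable under `X` and all `ρ(h)`. -/
def BStable {Γ : Type*} {V : Type*} [AddCommGroup V] [Module ℂ V]
    (ρ : Γ → Module.End ℂ V) (X : Module.End ℂ V) (W : Submodule ℂ V) : Prop :=
  (∀ v ∈ W, X v ∈ W) ∧ ∀ h : Γ, ∀ v ∈ W, ρ h v ∈ W

/-- Irreducibility: `V ≠ 0` and the only stable subspaces are `0` and `V`. -/
def BIrred {Γ : Type*} {V : Type*} [AddCommGroup V] [Module ℂ V]
    (ρ : Γ → Module.End ℂ V) (X : Module.End ℂ V) : Prop :=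
  (∃ v : V, v ≠ 0) ∧ ∀ W : Submodule ℂ V, BStable ρ X W → W = ⊥ ∨ W = ⊤

/-- Case (II): suppose `χ₁` has order exactly `r` and `(V, ρ, X, Y)` is an irreducible
representation with `X^r = id`, `Y^s = 0` for some `s > 0`, and `X∘Y = χ₂(g₁)·(Y∘X)`.
Then `Y = 0` on `V`, and consequently `(V, ρ, X)` is an irreducible
`B(ξ)`-representation in the sense of Lemma "basic". -/
theorem caseII_irreducible {Γ : Type*} [CommGroup Γ] [Fintype Γ] (g₁ g₂ : Γ)
    (χ₁ χ₂ : Γ →* ℂˣ) (h12 : χ₁ g₂ * χ₂ g₁ = 1)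
    (r : ℕ) (hr : 1 < r) (hq : IsPrimitiveRoot ((χ₁ g₁ : ℂˣ) : ℂ) r)
    (hord : orderOf χ₁ = r)
    (Λ : Subgroup Γ) (hΛ : ∀ g : Γ, g ∈ Λ ↔ (χ₁ g = 1 ∧ χ₂ g = 1)) (ξ : ↥Λ →* ℂˣ)
    (s : ℕ) (hs : 0 < s)
    (V : Type*) [AddCommGroup V] [Module ℂ V] [FiniteDimensional ℂ V]
    (ρ : Γ → Module.End ℂ V) (X Y : Module.End ℂ V)
    (hrep : IsRep χ₁ χ₂ Λ ξ ρ X Y)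
    (hX : X ^ r = 1) (hY : Y ^ s = 0)
    (hXY : X * Y = (χ₂ g₁ : ℂ) • (Y * X))
    (hirr : Irred2 ρ X Y) :
    Y = 0 ∧ IsBRep χ₁ Λ ξ r ρ X ∧ BIrred ρ X := by
  obtain ⟨hmul, hone, hρX, hρY, hΛξ⟩ := hrep
  have hY0 : Y = 0 := by
    set W : Submodule ℂ V := LinearMap.ker Y with hW
    have hstab : Stable2 ρ X Y W := by
      refine ⟨?_, ?_, ?_⟩
      · intro v hv
        have h1 : (X * Y) v = ((χ₂ g₁ : ℂ) • (Y * X)) v := by rw [hXY]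
        simp only [Module.End.mul_apply, LinearMap.smul_apply] at h1
        rw [LinearMap.mem_ker] at hv ⊢
        rw [hv, map_zero] at h1
        have := (smul_eq_zero.mp h1.symm).resolve_left (Units.ne_zero (χ₂ g₁))
        exact this
      · intro v hv
        rw [LinearMap.mem_ker] at hv ⊢
        rw [hv, map_zero]
      · intro h v hv
        have h1 : (ρ h * Y) v = ((χ₂ h : ℂ) • (Y * ρ h)) v := by rw [hρY h]
        simp only [Module.End.mul_apply, LinearMap.smul_apply] at h1
        rw [LinearMap.mem_ker] at hv ⊢
        rw [hv, map_zero] at h1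
        exact (smul_eq_zero.mp h1.symm).resolve_left (Units.ne_zero (χ₂ h))
    have hWne : W ≠ ⊥ := by
      obtain ⟨v, hv⟩ := hirr.1
      have hex : ∃ k, (Y ^ k) v = 0 := ⟨s, by rw [hY]; rfl⟩
      classical
      set k := Nat.find hex with hk
      have hk0 : 0 < k := by
        rcases Nat.eq_zero_or_pos k with h0 | h0
        · exfalso; have := Nat.find_spec hex; rw [← hk, h0] at this; simp at this
          exact hv this
        · exact h0
      intro hbot
      have hw : (Y ^ (k - 1)) v ≠ 0 := Nat.find_min hex (Nat.sub_lt hk0 one_pos)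
      have hmem : (Y ^ (k - 1)) v ∈ W := by
        rw [hW, LinearMap.mem_ker]
        have : Y ((Y ^ (k - 1)) v) = (Y ^ k) v := by
          conv_rhs => rw [show k = (k-1) + 1 from (Nat.succ_pred_eq_of_pos hk0).symm]
          rw [pow_succ']
          rfl
        rw [this]
        exact Nat.find_spec hex
      rw [hbot, Submodule.mem_bot] at hmem
      exact hw hmem
    have := (hirr.2 W hstab).resolve_left hWne
    ext v
    have : v ∈ W := this ▸ Submodule.mem_top
    exact this
  refine ⟨hY0, ⟨hmul, hone, hρX, hX, hΛξ⟩, hirr.1, ?_⟩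
  intro W hWst
  exact hirr.2 W ⟨hWst.1, fun v hv => by rw [hY0]; exact W.zero_mem, hWst.2⟩
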